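/- For all real x with |x| < 1, the sigmoid function satisfies |1/(1 + e^{−x}) − 1/(2 − x)| ≤ x²/2. -/

import Mathlib

lemma quad_le_exp {x : ℝ} (hx : 0 ≤ x) : 1 + x + x ^ 2 / 2 ≤ Real.exp x := by
  have h := Real.sum_le_exp_of_nonneg hx 3
  simp [Finset.sum_range_succ, Nat.factorial] at h
  nlinarith [h]

/-- Quantitative sigmoid approximation: for `|x| < 1`,
`|1/(1 + e^{−x}) − 1/(2 − x)| ≤ x²/2`. -/
theorem stmt_9 (x : ℝ) (hx : |x| < 1) :
    |1 / (1 + Real.exp (-x)) - 1 / (2 - x)| ≤ x ^ 2 / 2 := by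
  obtain ⟨hx1, hx2⟩ := abs_lt.mp hx
  have he : 0 < Real.exp (-x) := Real.exp_pos _
  have ha : 0 < 1 + Real.exp (-x) := by linarith
  have hb : 0 < 2 - x := by linarith
  have hnum : 1 - x ≤ Real.exp (-x) := by
    have := Real.add_one_le_exp (-x); linarith
  have hrw : 1 / (1 + Real.exp (-x)) - 1 / (2 - x)
      = (1 - x - Real.exp (-x)) / ((1 + Real.exp (-x)) * (2 - x)) := by
    field_simp; ring
  rw [hrw, abs_div, abs_of_pos (mul_pos ha hb),
    abs_of_nonpos (by linarith : 1 - x - Real.exp (-x) ≤ 0),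
    div_le_iff₀ (mul_pos ha hb)]
  -- goal: -(1 - x - exp(-x)) ≤ x^2/2 * ((1+exp(-x)) * (2-x))
  rcases le_or_gt 0 x with hpos | hneg
  · -- x ≥ 0 : exp(-x) ≤ 1/(1+x+x²/2), so exp(-x)+x-1 ≤ x²/2; and a*b ≥ 1
    have hq : 1 + x + x ^ 2 / 2 ≤ Real.exp x := quad_le_exp hpos
    have hqpos : (0:ℝ) < 1 + x + x ^ 2 / 2 := by nlinarith
    have hinv : Real.exp (-x) ≤ 1 / (1 + x + x ^ 2 / 2) := by
      rw [Real.exp_neg, inv_eq_one_div]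
      exact one_div_le_one_div_of_le hqpos hq
    have h1 : Real.exp (-x) + x - 1 ≤ x ^ 2 / 2 := by
      have : 1 / (1 + x + x ^ 2 / 2) + x - 1 ≤ x ^ 2 / 2 := by
        rw [div_add' _ _ _ (ne_of_gt hqpos), div_sub' (ne_of_gt hqpos),
          div_le_iff₀ hqpos]
        nlinarith
      linarith
    have hab : 1 ≤ (1 + Real.exp (-x)) * (2 - x) := by nlinarith
    nlinarith [sq_nonneg x]
  · -- x < 0 : exp(-x)+x-1 ≤ x², and a ≥ 2, b ≥ 2
    have h1 : Real.exp (-x) + x - 1 ≤ x ^ 2 := by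
      have := Real.abs_exp_sub_one_sub_id_le (x := -x)
        (by rw [abs_neg]; exact le_of_lt hx)
      have := abs_le.mp this
      nlinarith [this.2]
    have ha2 : 2 ≤ 1 + Real.exp (-x) := by
      have : (1:ℝ) ≤ Real.exp (-x) := Real.one_le_exp (by linarith)
      linarith
    have hb2 : 2 ≤ 2 - x := by linarith
    have hab : 4 ≤ (1 + Real.exp (-x)) * (2 - x) := by
      have := mul_le_mul ha2 hb2 (by norm_num) (by linarith)
      linarith
    nlinarith [sq_nonneg x, mul_le_mul_of_nonneg_left hab (by positivity : (0:ℝ) ≤ x ^ 2 / 2)]
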